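/- Assume N ≥ 1, μ1, μ2, β > 0, r1, r2 > 1, and r1 + r2 < 2 + 4/N. Then for any a1, a2 > 0, the infimum m(a1,a2) of the energy J(u1,u2) = (1/2)∫(|∇u1|^2+|∇u2|^2) - (μ1 N/(2N+4))∫|u1|^{2+4/N} - (μ2 N/(2N+4))∫|u2|^{2+4/N} - β∫|u1|^{r1}|u2|^{r2} over the double mass constraint S(a1,a2) = {(u1,u2) ∈ H^1 × H^1 : ‖u_i‖_2^2 = a_i} is strictly negative. -/

import Mathlib

open Real



open MeasureTheory Filter

noncomputable section

/-- Euclidean space `ℝ^N`. -/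
abbrev Rn (N : ℕ) := EuclideanSpace ℝ (Fin N)

/-- The Sobolev space `H^1(ℝ^N; ℂ)`: `u` and its (Fréchet) derivative are in `L^2`. -/
def H1 (N : ℕ) : Set (Rn N → ℂ) :=
  {u | MemLp u 2 volume ∧ MemLp (fun x => fderiv ℝ u x) 2 volume}

/-- The energy functional `J` of the NLS system. -/
def Jfun (N : ℕ) (μ1 μ2 β r1 r2 : ℝ) (u : (Rn N → ℂ) × (Rn N → ℂ)) : ℝ :=
  (1 / 2) * (∫ x, (‖fderiv ℝ u.1 x‖ ^ 2 + ‖fderiv ℝ u.2 x‖ ^ 2))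
    - (μ1 * (N : ℝ) / (2 * (N : ℝ) + 4)) * (∫ x, ‖u.1 x‖ ^ ((2 : ℝ) + 4 / (N : ℝ)))
    - (μ2 * (N : ℝ) / (2 * (N : ℝ) + 4)) * (∫ x, ‖u.2 x‖ ^ ((2 : ℝ) + 4 / (N : ℝ)))
    - β * (∫ x, ‖u.1 x‖ ^ r1 * ‖u.2 x‖ ^ r2)

/-- The double mass constraint `S(a₁,a₂)`. -/
def Sconstr (N : ℕ) (a1 a2 : ℝ) : Set ((Rn N → ℂ) × (Rn N → ℂ)) :=
  {u | u.1 ∈ H1 N ∧ u.2 ∈ H1 N ∧ (∫ x, ‖u.1 x‖ ^ 2) = a1 ∧ (∫ x, ‖u.2 x‖ ^ 2) = a2}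

/-- The Laplacian of a real-valued function on `ℝ^N`. -/
def lapR {N : ℕ} (u : Rn N → ℝ) (x : Rn N) : ℝ :=
  ∑ i : Fin N, fderiv ℝ (fun y => fderiv ℝ u y (EuclideanSpace.single i 1)) x
    (EuclideanSpace.single i 1)

/-- The Laplacian of a complex-valued function on `ℝ^N`. -/
def lapC {N : ℕ} (u : Rn N → ℂ) (x : Rn N) : ℂ :=
  ∑ i : Fin N, fderiv ℝ (fun y => fderiv ℝ u y (EuclideanSpace.single i 1)) x
    (EuclideanSpace.single i 1)

/-- `Q` is a positive, radially symmetric solution of the Gagliardo–Nirenberg equation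
for the mass critical exponent `p = 2 + 4/N`, i.e. `-ΔQ + (2/N) Q = Q^{1+4/N}`. -/
def IsGNGroundState (N : ℕ) (Q : Rn N → ℝ) : Prop :=
  (∀ x, 0 < Q x) ∧ (∀ x y : Rn N, ‖x‖ = ‖y‖ → Q x = Q y) ∧
    MemLp Q 2 volume ∧ MemLp (fun x => fderiv ℝ Q x) 2 volume ∧
    (∀ x, -lapR Q x + (2 / (N : ℝ)) * Q x = Q x ^ ((1 : ℝ) + 4 / (N : ℝ)))

/-- The critical mass `a* = μ^{-N/2} ‖Q‖₂²`. -/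
def aStar (N : ℕ) (μ : ℝ) (Q : Rn N → ℝ) : ℝ :=
  μ ^ (-(N : ℝ) / 2) * ∫ x, Q x ^ 2

/-- Squared `H¹` distance between two functions. -/
def H1distSq {N : ℕ} (u v : Rn N → ℂ) : ℝ :=
  (∫ x, ‖u x - v x‖ ^ 2) + ∫ x, ‖fderiv ℝ u x - fderiv ℝ v x‖ ^ 2

/-- `H¹ × H¹` distance between two pairs of functions. -/
def dH1 {N : ℕ} (u v : (Rn N → ℂ) × (Rn N → ℂ)) : ℝ :=
  Real.sqrt (H1distSq u.1 v.1 + H1distSq u.2 v.2)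

/-- Assumption (A1). -/
def A1cond (N : ℕ) (r1 r2 : ℝ) : Prop :=
  r2 < 2 ∧ (3 ≤ N → 2 * r1 / (2 - r2) ≤ 2 * (N : ℝ) / ((N : ℝ) - 2))

/-- Assumption (A2). -/
def A2cond (N : ℕ) (r1 r2 : ℝ) : Prop :=
  r1 < 2 ∧ (3 ≤ N → 2 * r2 / (2 - r1) ≤ 2 * (N : ℝ) / ((N : ℝ) - 2))

lemma gauss_integrable (N : ℕ) {b : ℝ} (hb : 0 < b) :
    Integrable (fun x : Rn N => rexp (-b * ‖x‖ ^ 2)) := by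
  have h := GaussianFourier.integrable_cexp_neg_mul_sq_norm_add (V := Rn N) (b := (b:ℂ))
    (by simpa using hb) 0 0
  refine h.norm.congr ?_
  filter_upwards with x
  simp [Complex.norm_exp, ← Complex.ofReal_pow]

lemma norm_ofRealCLM_comp {E : Type*} [NormedAddCommGroup E] [NormedSpace ℝ E]
    (L : E →L[ℝ] ℝ) : ‖Complex.ofRealCLM.comp L‖ = ‖L‖ := by
  have := Complex.ofRealLI.norm_toContinuousLinearMap_comp (g := L)
  exact this

lemma gauss_sq_integrable (N : ℕ) {b : ℝ} (hb : 0 < b) :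
    Integrable (fun x : Rn N => ‖x‖ ^ 2 * rexp (-b * ‖x‖ ^ 2)) := by
  have hg : Integrable (fun x : Rn N => (2 / b) * rexp (-(b / 2) * ‖x‖ ^ 2)) :=
    (gauss_integrable N (by positivity)).const_mul _
  refine hg.mono' ?_ ?_
  · exact ((continuous_norm.pow 2).mul
      (((continuous_const.mul ((continuous_norm.pow 2))).rexp))).aestronglyMeasurable
  · filter_upwards with x
    rw [Real.norm_eq_abs, abs_of_nonneg (by positivity)]
    have h0 : rexp (-b * ‖x‖ ^ 2)
        = rexp (-(b / 2) * ‖x‖ ^ 2) * rexp (-(b / 2) * ‖x‖ ^ 2) := by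
      rw [← Real.exp_add]; ring_nf
    have hp := Real.exp_pos (-(b / 2) * ‖x‖ ^ 2)
    have hs := Real.add_one_le_exp (b / 2 * ‖x‖ ^ 2)
    have hmul : rexp (-(b / 2) * ‖x‖ ^ 2) * rexp (b / 2 * ‖x‖ ^ 2) = 1 := by
      rw [← Real.exp_add]; ring_nf; exact Real.exp_zero
    have h2 : ‖x‖ ^ 2 * rexp (-(b / 2) * ‖x‖ ^ 2) ≤ 2 / b := by
      rw [le_div_iff₀ hb]
      nlinarith [mul_le_mul_of_nonneg_left hs hp.le, sq_nonneg ‖x‖]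
    calc ‖x‖ ^ 2 * rexp (-b * ‖x‖ ^ 2)
        = ‖x‖ ^ 2 * rexp (-(b / 2) * ‖x‖ ^ 2) * rexp (-(b / 2) * ‖x‖ ^ 2) := by
          rw [h0]; ring
      _ ≤ 2 / b * rexp (-(b / 2) * ‖x‖ ^ 2) := mul_le_mul_of_nonneg_right h2 hp.le


lemma gauss_sq_integral_scaling (N : ℕ) {b : ℝ} (hb : 0 < b) :
    ∫ x : Rn N, ‖x‖ ^ 2 * rexp (-b * ‖x‖ ^ 2)
      = b ^ (-(N : ℝ) / 2 - 1) * ∫ x : Rn N, ‖x‖ ^ 2 * rexp (-‖x‖ ^ 2) := by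
  have h := MeasureTheory.Measure.integral_comp_smul (μ := (volume : Measure (Rn N)))
    (fun x : Rn N => ‖x‖ ^ 2 * rexp (-‖x‖ ^ 2)) (Real.sqrt b)
  have hsq : ∀ x : Rn N, ‖Real.sqrt b • x‖ ^ 2 = b * ‖x‖ ^ 2 := by
    intro x
    rw [norm_smul, mul_pow, Real.norm_eq_abs, sq_abs, Real.sq_sqrt hb.le]
  simp only [hsq] at h
  have hpow : (Real.sqrt b) ^ (Module.finrank ℝ (Rn N)) = b ^ ((N : ℝ) / 2) := by
    rw [finrank_euclideanSpace_fin, ← Real.rpow_natCast (Real.sqrt b) N,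
      Real.sqrt_eq_rpow, ← Real.rpow_mul hb.le]
    ring_nf
  rw [hpow] at h
  have h2 : ∫ x : Rn N, b * ‖x‖ ^ 2 * rexp (-(b * ‖x‖ ^ 2))
      = b * ∫ x : Rn N, ‖x‖ ^ 2 * rexp (-b * ‖x‖ ^ 2) := by
    rw [← integral_const_mul]
    congr 1 with x
    ring_nf
  rw [h2] at h
  have hb2 : (0:ℝ) < b ^ ((N : ℝ) / 2) := Real.rpow_pos_of_pos hb _
  have habs : |(b ^ ((N : ℝ) / 2))⁻¹| = (b ^ ((N : ℝ) / 2))⁻¹ := abs_of_pos (by positivity)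
  rw [habs, smul_eq_mul] at h
  have : ∫ x : Rn N, ‖x‖ ^ 2 * rexp (-b * ‖x‖ ^ 2)
      = b⁻¹ * ((b ^ ((N : ℝ) / 2))⁻¹ * ∫ x : Rn N, ‖x‖ ^ 2 * rexp (-‖x‖ ^ 2)) := by
    field_simp at h ⊢
    linarith [h]
  rw [this, ← mul_assoc]
  congr 1
  rw [← Real.rpow_neg_one b, ← Real.rpow_neg hb.le, ← Real.rpow_add hb]
  ring_nf


def gaussC (N : ℕ) (c l : ℝ) : Rn N → ℂ := fun x => ((c * rexp (-l * ‖x‖ ^ 2) : ℝ) : ℂ)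

lemma gaussC_norm (N : ℕ) {c : ℝ} (l : ℝ) (hc : 0 ≤ c) (x : Rn N) :
    ‖gaussC N c l x‖ = c * rexp (-l * ‖x‖ ^ 2) := by
  rw [gaussC, Complex.norm_real, Real.norm_eq_abs, abs_of_nonneg (by positivity)]

lemma gaussC_hasFDerivAt {N : ℕ} (c l : ℝ) (x : Rn N) :
    HasFDerivAt (gaussC N c l)
      ((c * rexp (-l * ‖x‖ ^ 2) * (-2 * l)) •
        (Complex.ofRealCLM.comp (innerSL ℝ x))) x := by
  have h1 := (hasStrictFDerivAt_norm_sq x).hasFDerivAt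
  have h2 := ((h1.const_mul (-l)).exp.const_mul c)
  have h3 := Complex.ofRealCLM.hasFDerivAt.comp x h2
  refine h3.congr_fderiv ?_
  ext v
  simp only [ContinuousLinearMap.coe_smul', Pi.smul_apply, ContinuousLinearMap.coe_comp',
    Function.comp_apply, smul_eq_mul, Complex.ofRealCLM_apply, Complex.real_smul,
    Complex.ofReal_exp]
  push_cast
  ring

lemma gaussC_fderiv {N : ℕ} (c l : ℝ) (x : Rn N) :
    fderiv ℝ (gaussC N c l) x
      = (c * rexp (-l * ‖x‖ ^ 2) * (-2 * l)) • (Complex.ofRealCLM.comp (innerSL ℝ x)) :=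
  (gaussC_hasFDerivAt c l x).fderiv

lemma gaussC_fderiv_norm {N : ℕ} {c l : ℝ} (hc : 0 ≤ c) (hl : 0 ≤ l) (x : Rn N) :
    ‖fderiv ℝ (gaussC N c l) x‖ = 2 * l * c * rexp (-l * ‖x‖ ^ 2) * ‖x‖ := by
  rw [gaussC_fderiv]
  rw [norm_smul (c * rexp (-l * ‖x‖ ^ 2) * (-2 * l)) (Complex.ofRealCLM.comp ((innerSL ℝ) x))]
  have h1 : ‖Complex.ofRealCLM.comp (innerSL ℝ x)‖ = ‖x‖ :=
    (norm_ofRealCLM_comp _).trans (innerSL_apply_norm (𝕜 := ℝ) x)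
  have hk : c * rexp (-l * ‖x‖ ^ 2) * (-2 * l) ≤ 0 := by
    nlinarith [Real.exp_pos (-l * ‖x‖ ^ 2), mul_nonneg hc (Real.exp_pos (-l * ‖x‖ ^ 2)).le]
  rw [h1, Real.norm_eq_abs, abs_of_nonpos hk]
  ring

lemma gaussC_cont {N : ℕ} (c l : ℝ) : Continuous (gaussC N c l) :=
  Complex.continuous_ofReal.comp
    (continuous_const.mul ((continuous_const.mul (continuous_norm.pow 2)).rexp))

lemma gaussC_fderiv_cont {N : ℕ} (c l : ℝ) :
    Continuous fun x : Rn N => fderiv ℝ (gaussC N c l) x := by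
  have hG : Continuous fun x : Rn N => Complex.ofRealCLM.comp (innerSL ℝ x) := by
    have : LipschitzWith 1 fun x : Rn N => Complex.ofRealCLM.comp (innerSL ℝ x) := by
      refine LipschitzWith.of_dist_le_mul fun x y => ?_
      rw [dist_eq_norm, dist_eq_norm]
      have he : Complex.ofRealCLM.comp (innerSL ℝ x) - Complex.ofRealCLM.comp (innerSL ℝ y)
          = Complex.ofRealCLM.comp (innerSL ℝ (x - y)) := by
        ext v; simp [ContinuousLinearMap.sub_apply, inner_sub_left, Complex.ofReal_sub]
      rw [he, NNReal.coe_one, one_mul,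
        (norm_ofRealCLM_comp _).trans (innerSL_apply_norm (𝕜 := ℝ) (x - y))]
    exact this.continuous
  have hk : Continuous fun x : Rn N => c * rexp (-l * ‖x‖ ^ 2) * (-2 * l) :=
    ((continuous_const.mul ((continuous_const.mul (continuous_norm.pow 2)).rexp)).mul
      continuous_const)
  have : Continuous fun x : Rn N =>
      (c * rexp (-l * ‖x‖ ^ 2) * (-2 * l)) • (Complex.ofRealCLM.comp (innerSL ℝ x)) :=
    hk.smul hG
  refine this.congr fun x => ?_
  exact (gaussC_fderiv c l x).symm

lemma gauss_integral' (N : ℕ) {b : ℝ} (hb : 0 < b) :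
    ∫ x : Rn N, rexp (-b * ‖x‖ ^ 2) = (π / b) ^ ((N : ℝ) / 2) := by
  rw [GaussianFourier.integral_rexp_neg_mul_sq_norm hb, finrank_euclideanSpace_fin]

lemma gaussC_normsq (N : ℕ) {c : ℝ} (l : ℝ) (hc : 0 ≤ c) (x : Rn N) :
    ‖gaussC N c l x‖ ^ 2 = c ^ 2 * rexp (-(2 * l) * ‖x‖ ^ 2) := by
  rw [gaussC_norm N l hc, mul_pow, sq (rexp _), ← Real.exp_add]
  have : -l * ‖x‖ ^ 2 + -l * ‖x‖ ^ 2 = -(2 * l) * ‖x‖ ^ 2 := by ring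
  rw [this]

lemma gaussC_memL2 (N : ℕ) {c l : ℝ} (hc : 0 ≤ c) (hl : 0 < l) :
    MemLp (gaussC N c l) 2 volume := by
  rw [memLp_two_iff_integrable_sq_norm (gaussC_cont c l).aestronglyMeasurable]
  refine ((gauss_integrable N (b := 2 * l) (by positivity)).const_mul (c ^ 2)).congr ?_
  filter_upwards with x
  exact (gaussC_normsq N l hc x).symm

lemma gaussC_massIntegral (N : ℕ) {c l : ℝ} (hc : 0 ≤ c) (hl : 0 < l) :
    ∫ x : Rn N, ‖gaussC N c l x‖ ^ 2 = c ^ 2 * (π / (2 * l)) ^ ((N : ℝ) / 2) := by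
  simp_rw [gaussC_normsq N l hc]
  rw [integral_const_mul, gauss_integral' N (by positivity)]

lemma gaussC_fderiv_normsq (N : ℕ) {c l : ℝ} (hc : 0 ≤ c) (hl : 0 ≤ l) (x : Rn N) :
    ‖fderiv ℝ (gaussC N c l) x‖ ^ 2
      = (4 * l ^ 2 * c ^ 2) * (‖x‖ ^ 2 * rexp (-(2 * l) * ‖x‖ ^ 2)) := by
  rw [gaussC_fderiv_norm hc hl]
  have : rexp (-l * ‖x‖ ^ 2) ^ 2 = rexp (-(2 * l) * ‖x‖ ^ 2) := by
    rw [sq (rexp _), ← Real.exp_add]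
    congr 1
    ring
  calc (2 * l * c * rexp (-l * ‖x‖ ^ 2) * ‖x‖) ^ 2
      = (4 * l ^ 2 * c ^ 2) * (‖x‖ ^ 2 * rexp (-l * ‖x‖ ^ 2) ^ 2) := by ring
    _ = (4 * l ^ 2 * c ^ 2) * (‖x‖ ^ 2 * rexp (-(2 * l) * ‖x‖ ^ 2)) := by rw [this]

lemma gaussC_fderiv_integrable_sq (N : ℕ) {c l : ℝ} (hc : 0 ≤ c) (hl : 0 < l) :
    Integrable (fun x : Rn N => ‖fderiv ℝ (gaussC N c l) x‖ ^ 2) := by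
  refine ((gauss_sq_integrable N (b := 2 * l) (by positivity)).const_mul
    (4 * l ^ 2 * c ^ 2)).congr ?_
  filter_upwards with x
  exact (gaussC_fderiv_normsq N hc hl.le x).symm

lemma gaussC_fderiv_memL2 (N : ℕ) {c l : ℝ} (hc : 0 ≤ c) (hl : 0 < l) :
    MemLp (fun x : Rn N => fderiv ℝ (gaussC N c l) x) 2 volume := by
  rw [memLp_two_iff_integrable_sq_norm (gaussC_fderiv_cont c l).aestronglyMeasurable]
  exact gaussC_fderiv_integrable_sq N hc hl

lemma gaussC_kinetic (N : ℕ) {c l : ℝ} (hc : 0 ≤ c) (hl : 0 < l) :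
    ∫ x : Rn N, ‖fderiv ℝ (gaussC N c l) x‖ ^ 2
      = 4 * l ^ 2 * c ^ 2 *
        ((2 * l) ^ (-(N : ℝ) / 2 - 1) * ∫ x : Rn N, ‖x‖ ^ 2 * rexp (-‖x‖ ^ 2)) := by
  simp_rw [gaussC_fderiv_normsq N hc hl.le]
  rw [integral_const_mul, gauss_sq_integral_scaling N (by positivity)]

lemma gaussC_rpow (N : ℕ) {c : ℝ} (l r : ℝ) (hc : 0 ≤ c) (x : Rn N) :
    ‖gaussC N c l x‖ ^ r = c ^ r * rexp (-(l * r) * ‖x‖ ^ 2) := by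
  rw [gaussC_norm N l hc, Real.mul_rpow hc (Real.exp_pos _).le, ← Real.exp_mul]
  congr 2
  ring

set_option maxHeartbeats 2000000 in
/-- under (H), for any `a1, a2 > 0` the infimum `m(a1,a2)` of `J` over
`S(a1,a2)` is strictly negative, i.e. there is a constrained pair with negative energy. -/
theorem m_neg (N : ℕ) (μ1 μ2 β r1 r2 : ℝ) (hN : 1 ≤ N)
    (hμ1 : 0 < μ1) (hμ2 : 0 < μ2) (hβ : 0 < β) (hr1 : 1 < r1) (hr2 : 1 < r2)
    (hr : r1 + r2 < 2 + 4 / (N : ℝ))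
    (a1 a2 : ℝ) (ha1 : 0 < a1) (ha2 : 0 < a2) :
    ∃ u ∈ Sconstr N a1 a2, Jfun N μ1 μ2 β r1 r2 u < 0 := by
  have hπ := Real.pi_pos
  have hn0 : (0:ℝ) < (N : ℝ) := by exact_mod_cast Nat.lt_of_lt_of_le Nat.zero_lt_one hN
  have hr12 : (0:ℝ) < r1 + r2 := by linarith
  have hK1 : 0 ≤ ∫ x : Rn N, ‖x‖ ^ 2 * Real.exp (-‖x‖ ^ 2) :=
    integral_nonneg fun x => by positivity
  set K1e : ℝ := ∫ x : Rn N, ‖x‖ ^ 2 * Real.exp (-‖x‖ ^ 2) with hK1def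
  set Aex : ℝ := (a1 + a2) * Real.pi ^ (-((N:ℝ)/2)) * K1e with hAdef
  set θ : ℝ := (N:ℝ) * (r1 + r2) / 4 - (N:ℝ) / 2 with hθdef
  set Dex : ℝ := β * a1 ^ (r1/2) * a2 ^ (r2/2) * (2/Real.pi) ^ ((N:ℝ)*(r1+r2)/4)
    * (Real.pi/(r1+r2)) ^ ((N:ℝ)/2) with hDdef
  clear_value K1e Aex θ Dex
  have hθ1 : θ < 1 := by
    have h := mul_lt_mul_of_pos_left hr hn0
    have h2 : (N:ℝ) * (2 + 4 / (N:ℝ)) = 2 * (N:ℝ) + 4 := by field_simp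
    rw [h2] at h
    rw [hθdef]; nlinarith [h]
  have hθ0 : 0 < θ := by
    have h := mul_pos hn0 (show (0:ℝ) < r1 + r2 - 2 by linarith)
    rw [hθdef]; nlinarith [h]
  have hAex : 0 ≤ Aex := by rw [hAdef]; exact mul_nonneg (by positivity) hK1
  have hDex : 0 < Dex := by rw [hDdef]; positivity
  obtain ⟨l, hsmall, hl0⟩ :
      ∃ l : ℝ, ((Aex + 1) * l ^ ((1:ℝ) - θ) < Dex) ∧ l ∈ Set.Ioi (0:ℝ) := by
    have h1 : Tendsto (fun t : ℝ => t ^ ((1:ℝ) - θ)) (nhdsWithin 0 (Set.Ioi 0)) (nhds 0) := by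
      have hc := (Real.continuousAt_rpow_const 0 ((1:ℝ) - θ) (Or.inr (by linarith))).tendsto
      rw [Real.zero_rpow (by linarith : (1:ℝ) - θ ≠ 0)] at hc
      exact hc.mono_left nhdsWithin_le_nhds
    have h2 : Tendsto (fun t : ℝ => (Aex + 1) * t ^ ((1:ℝ) - θ))
        (nhdsWithin 0 (Set.Ioi 0)) (nhds 0) := by
      have := h1.const_mul (Aex + 1)
      simpa using this
    exact ((h2.eventually_lt_const hDex).and self_mem_nhdsWithin).exists
  have hl0' : (0:ℝ) < l := hl0
  have hl2 : (0:ℝ) < 2 * l := by positivity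
  have hbpos : (0:ℝ) < 2 * l / Real.pi := by positivity
  have hP : (0:ℝ) < (2 * l / Real.pi) ^ ((N:ℝ)/2) := Real.rpow_pos_of_pos hbpos _
  set c1 : ℝ := Real.sqrt (a1 * (2 * l / Real.pi) ^ ((N:ℝ)/2)) with hc1def
  set c2 : ℝ := Real.sqrt (a2 * (2 * l / Real.pi) ^ ((N:ℝ)/2)) with hc2def
  have hc1pos : 0 < c1 := Real.sqrt_pos.mpr (by positivity)
  have hc2pos : 0 < c2 := Real.sqrt_pos.mpr (by positivity)
  have hc1sq : c1 ^ 2 = a1 * (2 * l / Real.pi) ^ ((N:ℝ)/2) := Real.sq_sqrt (by positivity)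
  have hc2sq : c2 ^ 2 = a2 * (2 * l / Real.pi) ^ ((N:ℝ)/2) := Real.sq_sqrt (by positivity)
  clear_value c1 c2
  -- mass constraints
  have hmass1 : (∫ x : Rn N, ‖gaussC N c1 l x‖ ^ 2) = a1 := by
    rw [gaussC_massIntegral N hc1pos.le hl0', hc1sq, mul_assoc,
      ← Real.mul_rpow hbpos.le (by positivity),
      show (2*l/Real.pi) * (Real.pi/(2*l)) = 1 by field_simp, Real.one_rpow, mul_one]
  have hmass2 : (∫ x : Rn N, ‖gaussC N c2 l x‖ ^ 2) = a2 := by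
    rw [gaussC_massIntegral N hc2pos.le hl0', hc2sq, mul_assoc,
      ← Real.mul_rpow hbpos.le (by positivity),
      show (2*l/Real.pi) * (Real.pi/(2*l)) = 1 by field_simp, Real.one_rpow, mul_one]
  -- kinetic energy value
  have k1 := gaussC_kinetic N hc1pos.le hl0'
  have k2 := gaussC_kinetic N hc2pos.le hl0'
  rw [← hK1def] at k1 k2
  have hPQ : (2*l/Real.pi) ^ ((N:ℝ)/2) * ((2*l) ^ (-(N:ℝ)/2 - 1))
      = Real.pi ^ (-((N:ℝ)/2)) * (2*l)⁻¹ := by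
    rw [Real.div_rpow (by positivity) hπ.le, div_eq_mul_inv, ← Real.rpow_neg hπ.le]
    have h3 : (2*l) ^ ((N:ℝ)/2) * (2*l) ^ (-(N:ℝ)/2 - 1) = (2*l)⁻¹ := by
      rw [← Real.rpow_add hl2, show (N:ℝ)/2 + (-(N:ℝ)/2 - 1) = -1 by ring, Real.rpow_neg_one]
    calc (2*l) ^ ((N:ℝ)/2) * Real.pi ^ (-((N:ℝ)/2)) * (2*l) ^ (-(N:ℝ)/2 - 1)
        = Real.pi ^ (-((N:ℝ)/2)) * ((2*l) ^ ((N:ℝ)/2) * (2*l) ^ (-(N:ℝ)/2 - 1)) := by ring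
      _ = Real.pi ^ (-((N:ℝ)/2)) * (2*l)⁻¹ := by rw [h3]
  have hkinval : (1:ℝ)/2 * ((∫ x : Rn N, ‖fderiv ℝ (gaussC N c1 l) x‖ ^ 2)
      + ∫ x : Rn N, ‖fderiv ℝ (gaussC N c2 l) x‖ ^ 2) = Aex * l := by
    rw [k1, k2, hc1sq, hc2sq]
    calc (1:ℝ)/2 * (4*l^2*(a1 * (2*l/Real.pi) ^ ((N:ℝ)/2)) * ((2*l) ^ (-(N:ℝ)/2 - 1) * K1e)
          + 4*l^2*(a2 * (2*l/Real.pi) ^ ((N:ℝ)/2)) * ((2*l) ^ (-(N:ℝ)/2 - 1) * K1e))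
        = (a1+a2) * ((2*l/Real.pi) ^ ((N:ℝ)/2) * ((2*l) ^ (-(N:ℝ)/2 - 1))) * K1e * (2*l^2) := by
          ring
      _ = (a1+a2) * (Real.pi ^ (-((N:ℝ)/2)) * (2*l)⁻¹) * K1e * (2*l^2) := by rw [hPQ]
      _ = Aex * l := by rw [hAdef]; field_simp
  -- interaction value
  have hpt : ∀ x : Rn N, ‖gaussC N c1 l x‖ ^ r1 * ‖gaussC N c2 l x‖ ^ r2
      = (c1 ^ r1 * c2 ^ r2) * Real.exp (-(l*(r1+r2)) * ‖x‖ ^ 2) := fun x => by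
    rw [gaussC_rpow N l r1 hc1pos.le, gaussC_rpow N l r2 hc2pos.le]
    calc (c1 ^ r1 * Real.exp (-(l*r1) * ‖x‖^2)) * (c2 ^ r2 * Real.exp (-(l*r2) * ‖x‖^2))
        = c1 ^ r1 * c2 ^ r2 * (Real.exp (-(l*r1)*‖x‖^2) * Real.exp (-(l*r2)*‖x‖^2)) := by ring
      _ = (c1 ^ r1 * c2 ^ r2) * Real.exp (-(l*(r1+r2)) * ‖x‖ ^ 2) := by
          rw [← Real.exp_add]; congr 1; ring
  have hIval : (∫ x : Rn N, ‖gaussC N c1 l x‖ ^ r1 * ‖gaussC N c2 l x‖ ^ r2)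
      = (c1 ^ r1 * c2 ^ r2) * (Real.pi / (l*(r1+r2))) ^ ((N:ℝ)/2) := by
    simp_rw [hpt]
    rw [integral_const_mul, gauss_integral' N (by positivity)]
  -- closed form of c1 ^ r1, c2 ^ r2
  have hcr : ∀ a r : ℝ, 0 < a → 1 < r →
      (Real.sqrt (a * (2 * l / Real.pi) ^ ((N:ℝ)/2))) ^ r
        = a ^ (r/2) * ((2/Real.pi) ^ ((N:ℝ)*r/4) * l ^ ((N:ℝ)*r/4)) := by
    intro a r ha hrr
    have hx : (0:ℝ) ≤ a * (2 * l / Real.pi) ^ ((N:ℝ)/2) := by positivity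
    rw [Real.sqrt_eq_rpow, ← Real.rpow_mul hx,
      show ((1:ℝ)/2 * r) = r/2 from by ring,
      Real.mul_rpow ha.le hP.le, ← Real.rpow_mul hbpos.le,
      show ((N:ℝ)/2 * (r/2)) = (N:ℝ)*r/4 from by ring,
      show (2*l/Real.pi) = (2/Real.pi) * l from by ring,
      Real.mul_rpow (by positivity) hl0'.le]
  have hc1r := hcr a1 r1 ha1 hr1
  have hc2r := hcr a2 r2 ha2 hr2
  rw [← hc1def] at hc1r
  rw [← hc2def] at hc2r
  have hRR : (Real.pi / (l*(r1+r2))) ^ ((N:ℝ)/2)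
      = (Real.pi/(r1+r2)) ^ ((N:ℝ)/2) * l ^ (-((N:ℝ)/2)) := by
    rw [show Real.pi / (l*(r1+r2)) = (Real.pi/(r1+r2)) * l⁻¹ from by
        rw [mul_comm l (r1+r2), ← div_div, div_eq_mul_inv],
      Real.mul_rpow (by positivity) (by positivity), Real.inv_rpow hl0'.le,
      ← Real.rpow_neg hl0'.le]
  have hrhs : β * ((c1 ^ r1 * c2 ^ r2) * (Real.pi / (l*(r1+r2))) ^ ((N:ℝ)/2))
      = Dex * l ^ θ := by
    rw [hc1r, hc2r, hRR, hDdef, hθdef]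
    calc β * ((a1 ^ (r1/2) * ((2/Real.pi) ^ ((N:ℝ)*r1/4) * l ^ ((N:ℝ)*r1/4)))
            * (a2 ^ (r2/2) * ((2/Real.pi) ^ ((N:ℝ)*r2/4) * l ^ ((N:ℝ)*r2/4)))
            * ((Real.pi/(r1+r2)) ^ ((N:ℝ)/2) * l ^ (-((N:ℝ)/2))))
        = β * a1 ^ (r1/2) * a2 ^ (r2/2)
            * ((2/Real.pi) ^ ((N:ℝ)*r1/4) * (2/Real.pi) ^ ((N:ℝ)*r2/4))
            * (Real.pi/(r1+r2)) ^ ((N:ℝ)/2)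
            * (l ^ ((N:ℝ)*r1/4) * l ^ ((N:ℝ)*r2/4) * l ^ (-((N:ℝ)/2))) := by ring
      _ = β * a1 ^ (r1/2) * a2 ^ (r2/2) * (2/Real.pi) ^ ((N:ℝ)*(r1+r2)/4)
            * (Real.pi/(r1+r2)) ^ ((N:ℝ)/2)
            * l ^ ((N:ℝ)*(r1+r2)/4 - (N:ℝ)/2) := by
          rw [← Real.rpow_add (show (0:ℝ) < 2/Real.pi by positivity),
            ← Real.rpow_add hl0', ← Real.rpow_add hl0',
            show ((N:ℝ)*r1/4 + (N:ℝ)*r2/4) = (N:ℝ)*(r1+r2)/4 from by ring,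
            show ((N:ℝ)*(r1+r2)/4 + -((N:ℝ)/2)) = (N:ℝ)*(r1+r2)/4 - (N:ℝ)/2 from by ring]
  have key : (1:ℝ)/2 * ((∫ x : Rn N, ‖fderiv ℝ (gaussC N c1 l) x‖ ^ 2)
        + ∫ x : Rn N, ‖fderiv ℝ (gaussC N c2 l) x‖ ^ 2)
      < β * ∫ x : Rn N, ‖gaussC N c1 l x‖ ^ r1 * ‖gaussC N c2 l x‖ ^ r2 := by
    rw [hkinval, hIval, hrhs]
    calc Aex * l < (Aex + 1) * l := by nlinarith
      _ = ((Aex + 1) * l ^ ((1:ℝ) - θ)) * l ^ θ := by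
          rw [mul_assoc, ← Real.rpow_add hl0', show ((1:ℝ) - θ + θ) = 1 from by ring,
            Real.rpow_one]
      _ < Dex * l ^ θ := mul_lt_mul_of_pos_right hsmall (Real.rpow_pos_of_pos hl0' _)
  -- assemble
  refine ⟨(gaussC N c1 l, gaussC N c2 l),
    ⟨⟨gaussC_memL2 N hc1pos.le hl0', gaussC_fderiv_memL2 N hc1pos.le hl0'⟩,
     ⟨gaussC_memL2 N hc2pos.le hl0', gaussC_fderiv_memL2 N hc2pos.le hl0'⟩,
     hmass1, hmass2⟩, ?_⟩
  have hadd : (∫ x : Rn N, (‖fderiv ℝ (gaussC N c1 l) x‖ ^ 2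
        + ‖fderiv ℝ (gaussC N c2 l) x‖ ^ 2))
      = (∫ x : Rn N, ‖fderiv ℝ (gaussC N c1 l) x‖ ^ 2)
        + ∫ x : Rn N, ‖fderiv ℝ (gaussC N c2 l) x‖ ^ 2 :=
    integral_add (gaussC_fderiv_integrable_sq N hc1pos.le hl0')
      (gaussC_fderiv_integrable_sq N hc2pos.le hl0')
  have hM1 : 0 ≤ (μ1 * (N:ℝ) / (2 * (N:ℝ) + 4))
      * ∫ x : Rn N, ‖gaussC N c1 l x‖ ^ ((2:ℝ) + 4 / (N:ℝ)) :=
    mul_nonneg (by positivity) (integral_nonneg fun x => by positivity)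
  have hM2 : 0 ≤ (μ2 * (N:ℝ) / (2 * (N:ℝ) + 4))
      * ∫ x : Rn N, ‖gaussC N c2 l x‖ ^ ((2:ℝ) + 4 / (N:ℝ)) :=
    mul_nonneg (by positivity) (integral_nonneg fun x => by positivity)
  simp only [Jfun]
  rw [hadd]
  linarith [key, hM1, hM2]
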